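/- arXiv:2007.01352 — 3 statements merged into one kernel-verified Lean document; each statement's English description precedes it below -/
import Mathlib

section
/- Let (M,d) be a metric space, G a finite group acting continuously on M, and Z ⊆ M a finite set with g·Z = Z for all g ∈ G. Fix p∞ ∈ Z, and suppose there exist a real number η > 0 and a continuous map α : [0,η] → M such that d(p∞, α(t)) = t for all t ∈ [0,η] and α(t) ∉ Z for all t ∈ (0,η]. Then for every n ≥ 1 the projection π : C_{n+1}^G(M∖Z) → C_n^G(M∖Z) forgetting the last coordinate admits a continuous section s (that is, s is continuous and π ∘ s = id); explicitly, one may take s(p₁,…,pₙ) = (p₁,…,pₙ, α(min(η, ½ min{ d(p∞, g·pᵢ) : 1 ≤ i ≤ n, g ∈ G }))). -/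
/-!
A section adjoins to `(p₁, …, pₙ)` one more point chosen continuously off `Z` and off every
orbit `G • pᵢ`. The orbits avoid the `G`-stable set `Z ∋ p∞`, so their distance `D` to `p∞`
(a minimum over the finite set `Fin n × G`) is positive and continuous in the `pᵢ`. The point
`α (min η (D / 2))` lies at distance less than `D` from `p∞`, hence on no orbit, and it is not
in `Z` because its parameter lies in `(0, η]`.
-/

/-- The orbit configuration space `C_n^G(M ∖ Z)`: tuples of `n` points of `M ∖ Z` such that
`pᵢ ≠ g • pⱼ` for all `g ∈ G` and `i ≠ j`, topologized as a subspace of `Mⁿ`. -/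
abbrev OrbitConf (G : Type*) [Group G] (M : Type*) [MulAction G M] (Z : Set M) (n : ℕ) :
    Type _ :=
  {p : Fin n → M // (∀ i, p i ∉ Z) ∧ ∀ (i j : Fin n) (g : G), i ≠ j → p i ≠ g • p j}

/-- The projection `C_{n+1}^G(M ∖ Z) → C_n^G(M ∖ Z)` forgetting the last coordinate. -/
def orbitConfProj {G : Type*} [Group G] {M : Type*} [MulAction G M] {Z : Set M} {n : ℕ}
    (p : OrbitConf G M Z (n + 1)) : OrbitConf G M Z n :=
  ⟨fun i => p.val i.castSucc,
    fun i => p.2.1 i.castSucc,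
    fun i j g hij => p.2.2 i.castSucc j.castSucc g
      (fun h => hij (Fin.castSucc_injective n h))⟩

section Action

variable {G : Type*} [Group G] {M : Type*} [MulAction G M] {Z : Set M} {n : ℕ}

theorem smul_notMem_of_image_smul_eq (hZ : ∀ g : G, (fun x => g • x) '' Z = Z) {x : M}
    (hx : x ∉ Z) (g : G) : g • x ∉ Z := by
  rw [← hZ g, Set.image_smul, Set.smul_mem_smul_set_iff]
  exact hx

def OrbitConf.snoc (p : OrbitConf G M Z n) (x : M) (hxZ : x ∉ Z)
    (hx : ∀ i (g : G), x ≠ g • p.1 i) : OrbitConf G M Z (n + 1) :=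
  ⟨Fin.snoc p.1 x, Fin.lastCases (by simpa using hxZ) (fun i => by simpa using p.2.1 i),
    by
      intro i j g hij
      cases i using Fin.lastCases <;> cases j using Fin.lastCases
      case last.last => exact absurd rfl hij
      case last.cast j => simpa using hx j g
      case cast.last i =>
        simp only [Fin.snoc_castSucc, Fin.snoc_last]
        exact fun h => hx i g⁻¹ (by rw [h, inv_smul_smul])
      case cast.cast i j =>
        simpa using p.2.2 i j g fun h => hij (congrArg Fin.castSucc h)⟩

theorem orbitConfProj_snoc (p : OrbitConf G M Z n) (x : M) (hxZ : x ∉ Z)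
    (hx : ∀ i (g : G), x ≠ g • p.1 i) : orbitConfProj (OrbitConf.snoc p x hxZ hx) = p :=
  Subtype.ext <| funext fun _ => Fin.snoc_castSucc (α := fun _ => M) _ _ _

theorem exists_continuous_section_orbitConfProj [TopologicalSpace M]
    {f : OrbitConf G M Z n → M} (hf : Continuous f) (hfZ : ∀ p, f p ∉ Z)
    (hf_orbit : ∀ p i (g : G), f p ≠ g • p.1 i) :
    ∃ s : OrbitConf G M Z n → OrbitConf G M Z (n + 1),
      Continuous s ∧ orbitConfProj ∘ s = id :=
  ⟨fun p => OrbitConf.snoc p (f p) (hfZ p) (hf_orbit p),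
    (continuous_subtype_val.finSnoc (A := fun _ => M) hf).subtype_mk _,
    funext fun p => orbitConfProj_snoc p _ _ _⟩

end Action

section Metric

variable (G : Type*) [Group G] [Fintype G] {M : Type*} [MetricSpace M] [MulAction G M]
  {n : ℕ} [NeZero n]

def orbitsInfDist (a : M) (p : Fin n → M) : ℝ :=
  Finset.univ.inf' Finset.univ_nonempty fun x : Fin n × G => dist a (x.2 • p x.1)

variable {G}

theorem orbitsInfDist_le (a : M) (p : Fin n → M) (i : Fin n) (g : G) :
    orbitsInfDist G a p ≤ dist a (g • p i) :=
  Finset.inf'_le _ (Finset.mem_univ (i, g))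

theorem orbitsInfDist_pos {a : M} {p : Fin n → M} (h : ∀ i (g : G), g • p i ≠ a) :
    0 < orbitsInfDist G a p :=
  (Finset.lt_inf'_iff _).2 fun x _ => dist_pos.2 (h x.1 x.2).symm

theorem continuous_orbitsInfDist (hcont : ∀ g : G, Continuous fun x : M => g • x) (a : M) :
    Continuous (orbitsInfDist (n := n) G a) :=
  Continuous.finset_inf'_apply _ fun x _ =>
    continuous_const.dist ((hcont x.2).comp (continuous_apply x.1))

end Metric

theorem orbitConfProj_has_continuous_section_general
    {G : Type*} [Group G] [Finite G] {M : Type*} [MetricSpace M] [MulAction G M]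
    (hcont : ∀ g : G, Continuous fun x : M => g • x)
    (Z : Set M) (hZstab : ∀ g : G, (fun x => g • x) '' Z = Z)
    (pinf : M) (hpinf : pinf ∈ Z)
    (η : ℝ) (hη : 0 < η) (α : ℝ → M) (hα : ContinuousOn α (Set.Icc 0 η))
    (hdist : ∀ t ∈ Set.Icc (0 : ℝ) η, dist pinf (α t) = t)
    (hαZ : ∀ t ∈ Set.Ioc (0 : ℝ) η, α t ∉ Z) :
    ∀ n : ℕ, 1 ≤ n →
      ∃ s : OrbitConf G M Z n → OrbitConf G M Z (n + 1),
        Continuous s ∧ orbitConfProj ∘ s = id := by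
  intro n hn
  have := Fintype.ofFinite G
  have : NeZero n := ⟨by omega⟩
  set D : OrbitConf G M Z n → ℝ := fun p => orbitsInfDist G pinf p.1
  have hD_pos (p : OrbitConf G M Z n) : 0 < D p := orbitsInfDist_pos fun i g hg =>
    smul_notMem_of_image_smul_eq hZstab (p.2.1 i) g (hg ▸ hpinf)
  set r : OrbitConf G M Z n → ℝ := fun p => min η (D p / 2)
  have hr_mem (p : OrbitConf G M Z n) : r p ∈ Set.Ioc 0 η :=
    ⟨lt_min hη (half_pos (hD_pos p)), min_le_left _ _⟩
  have hr_lt (p : OrbitConf G M Z n) : r p < D p :=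
    (min_le_right _ _).trans_lt (half_lt_self (hD_pos p))
  refine exists_continuous_section_orbitConfProj (f := fun p => α (r p)) ?_
    (fun p => hαZ _ (hr_mem p)) fun p i g hg => ?_
  · have hD : Continuous D :=
      (continuous_orbitsInfDist hcont pinf).comp continuous_subtype_val
    exact hα.comp_continuous (continuous_const.min (hD.div_const 2))
      fun p => Set.Ioc_subset_Icc_self (hr_mem p)
  · have h := orbitsInfDist_le pinf p.1 i g
    rw [← hg, hdist _ (Set.Ioc_subset_Icc_self (hr_mem p))] at h
    exact (hr_lt p).not_ge h

/-- If `G` is a finite group acting continuously on a metric space `M`, `Z` a finite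
`G`-stable subset, `pinf ∈ Z`, and there is a continuous path `α : [0, η] → M` emanating
from `pinf` with `d(pinf, α t) = t` which avoids `Z` for `t ∈ (0, η]`, then for all `n ≥ 1`
the projection `C_{n+1}^G(M ∖ Z) → C_n^G(M ∖ Z)` admits a continuous section. -/
theorem orbitConfProj_has_continuous_section
    {G : Type*} [Group G] [Finite G] {M : Type*} [MetricSpace M] [MulAction G M]
    (hcont : ∀ g : G, Continuous fun x : M => g • x)
    (Z : Set M) (hZfin : Z.Finite) (hZstab : ∀ g : G, (fun x => g • x) '' Z = Z)
    (pinf : M) (hpinf : pinf ∈ Z)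
    (η : ℝ) (hη : 0 < η) (α : ℝ → M) (hα : ContinuousOn α (Set.Icc 0 η))
    (hdist : ∀ t ∈ Set.Icc (0 : ℝ) η, dist pinf (α t) = t)
    (hαZ : ∀ t ∈ Set.Ioc (0 : ℝ) η, α t ∉ Z) :
    ∀ n : ℕ, 1 ≤ n →
      ∃ s : OrbitConf G M Z n → OrbitConf G M Z (n + 1),
        Continuous s ∧ orbitConfProj ∘ s = id :=
  orbitConfProj_has_continuous_section_general hcont Z hZstab pinf hpinf η hη α hα hdist hαZ
end

section
/- Let S be a closed surface (a compact, connected, Hausdorff, second-countable topological manifold of dimension 2 without boundary), let Y ⊆ S be a finite set, and let f be a self-homeomorphism of the subspace S∖Y. Then there exists a unique self-homeomorphism F of S extending f, i.e., such that F(x) = f(x) for every x ∈ S∖Y. -/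
/-!
Every point `y` of the finite set `Y` has arbitrarily small neighbourhoods `U` with `U \ Y`
connected: in a chart these are balls punctured at `y`. A homeomorphism `f` of `Yᶜ` is proper, so
it sends the trace on `Yᶜ` of a small such `U` into a small neighbourhood of `Y`; being connected,
the image lies near a single point of `Y`. Hence `f` has a limit at each point of `Y` and extends
continuously to the whole surface; the extensions of `f` and `f⁻¹` are mutually inverse because
`Yᶜ` is dense.
-/

open Set Filter Topology Metric

section PuncturedNeighborhoods

variable {E : Type*} [NormedAddCommGroup E] [NormedSpace ℝ E]

open OpenPartialHomeomorph in
theorem isConnected_ball_diff_singleton (hE : 1 < Module.rank ℝ E) (c : E) {r : ℝ} (hr : 0 < r) :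
    IsConnected (ball c r \ {c}) := by
  let e := univBall c r
  have he : Function.Injective e := injOn_univ.1 (univBall_source c r ▸ e.injOn)
  have hrange : range e = ball c r := by
    rw [← image_univ, ← univBall_source c r, e.image_source_eq_target, univBall_target c hr]
  have himage : e '' {0}ᶜ = ball c r \ {c} := by
    rw [image_compl_eq_range_sdiff_image he, hrange, image_singleton, univBall_apply_zero]
  exact himage ▸ (isConnected_compl_singleton_of_one_lt_rank hE 0).image e
    (e.continuousOn.mono (univBall_source c r ▸ subset_univ _))

theorem ChartedSpace.hasBasis_nhds_isConnected_diff_singleton (hE : 1 < Module.rank ℝ E)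
    {X : Type*} [TopologicalSpace X] [ChartedSpace E X] (x : X) :
    (𝓝 x).HasBasis (fun U => U ∈ 𝓝 x ∧ IsConnected (U \ {x})) id := by
  let φ := chartAt E x
  have hx : x ∈ φ.source := mem_chart_source E x
  have hB : (𝓝 x).HasBasis (fun r => 0 < r ∧ ball (φ x) r ⊆ φ.target)
      (fun r => φ.symm '' ball (φ x) r) :=
    φ.symm_map_nhds_eq hx ▸ (nhds_basis_ball.restrict_subset (φ.open_target.mem_nhds
      (φ.map_source hx))).map φ.symm
  refine hasBasis_self.2 fun N hN => ?_
  obtain ⟨r, ⟨hr, hball⟩, hrN⟩ := hB.mem_iff.1 hN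
  refine ⟨_, hB.mem_of_mem ⟨hr, hball⟩, ?_, hrN⟩
  have himage : φ.symm '' (ball (φ x) r \ {φ x}) = φ.symm '' ball (φ x) r \ {x} := by
    rw [(φ.symm.injOn.mono (φ.symm_source ▸ hball)).image_sdiff_subset
      (singleton_subset_iff.2 (mem_ball_self hr)), image_singleton, φ.left_inv hx]
  exact himage ▸ (isConnected_ball_diff_singleton hE (φ x) hr).image _
    (φ.continuousOn_symm.mono (sdiff_subset.trans hball))

end PuncturedNeighborhoods

section NonseparatingSets

variable {X X' : Type*} [TopologicalSpace X] [TopologicalSpace X']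

theorem comap_nhds_le_cocompact [T2Space X] {s : Set X} {y : X} (hy : y ∉ s) :
    comap ((↑) : s → X) (𝓝 y) ≤ cocompact s := by
  refine (hasBasis_cocompact.ge_iff).2 fun K hK => mem_comap.2 ⟨((↑) '' K)ᶜ, ?_, ?_⟩
  · exact (hK.image continuous_subtype_val).isClosed.isOpen_compl.mem_nhds
      fun ⟨x, _, hx⟩ => hy (hx ▸ x.2)
  · exact fun x hx hxK => hx ⟨x, hxK, rfl⟩

theorem map_cocompact_compl_le_nhdsSet [CompactSpace X] {Y : Set X} :
    map ((↑) : (Yᶜ : Set X) → X) (cocompact (Yᶜ : Set X)) ≤ 𝓝ˢ Y := by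
  intro V hV
  have hK : IsCompact (((↑) : (Yᶜ : Set X) → X) ⁻¹' (interior V)ᶜ) := by
    rw [Subtype.isCompact_iff, Subtype.image_preimage_coe,
      inter_eq_right.2 (compl_subset_compl.2 (subset_interior_iff_mem_nhdsSet.2 hV))]
    exact isOpen_interior.isClosed_compl.isCompact
  exact mem_of_superset hK.compl_mem_cocompact fun x hx => interior_subset (not_not.1 hx)

theorem exists_le_nhds_of_hasBasis_isPreconnected [T2Space X] {Z : Set X} (hZ : Z.Finite)
    {ι : Sort*} {G : Filter X} [G.NeBot] {p : ι → Prop} {s : ι → Set X} (hG : G.HasBasis p s)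
    (hs : ∀ i, p i → IsPreconnected (s i)) (hGZ : G ≤ 𝓝ˢ Z) : ∃ z ∈ Z, G ≤ 𝓝 z := by
  obtain ⟨W, hW, hdisj⟩ := hZ.t2_separation
  have hWZ : ⋃ z ∈ Z, W z ∈ 𝓝ˢ Z :=
    (isOpen_biUnion fun z _ => (hW z).2).mem_nhdsSet.2 fun z hz => mem_biUnion hz (hW z).1
  obtain ⟨i, hi, hsW⟩ := hG.mem_iff.1 (hGZ hWZ)
  obtain ⟨x, hx⟩ := Filter.nonempty_of_mem (hG.mem_of_mem hi)
  obtain ⟨z, hz, hxz⟩ := mem_iUnion₂.1 (hsW hx)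
  have hdisj' : Disjoint (W z) (⋃ z' ∈ Z \ {z}, W z') :=
    disjoint_iUnion₂_right.2 fun z' hz' => hdisj hz hz'.1 (Ne.symm hz'.2)
  have hsz : s i ⊆ W z := by
    refine (hs i hi).subset_left_of_subset_union (hW z).2
      (isOpen_biUnion fun z' _ => (hW z').2) hdisj' (fun x hx => ?_) ⟨x, hx, hxz⟩
    obtain ⟨z', hz', hxz'⟩ := mem_iUnion₂.1 (hsW hx)
    rcases eq_or_ne z' z with rfl | hne
    · exact Or.inl hxz'
    · exact Or.inr (mem_biUnion ⟨hz', hne⟩ hxz')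
  refine ⟨z, hz, fun V hV => ?_⟩
  have hVZ : (W z ∩ V) ∪ ⋃ z' ∈ Z \ {z}, W z' ∈ 𝓝ˢ Z := by
    refine mem_nhdsSet_iff_forall.2 fun z' hz' => ?_
    rcases eq_or_ne z' z with rfl | hne
    · exact mem_of_superset (inter_mem ((hW z').2.mem_nhds (hW z').1) hV) subset_union_left
    · exact mem_of_superset ((hW z').2.mem_nhds (hW z').1)
        (subset_union_of_subset_right (subset_biUnion_of_mem (u := W)
          (show z' ∈ Z \ {z} from ⟨hz', hne⟩)) _)
  refine mem_of_superset (inter_mem (hG.mem_of_mem hi) (hGZ hVZ)) ?_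
  rintro x ⟨hxs, hxV | hxV⟩
  · exact hxV.2
  · exact absurd hxV (disjoint_left.1 hdisj' (hsz hxs))

theorem Homeomorph.leftInverse_extend_symm_extend [T2Space X] [T2Space X'] {s : Set X}
    {t : Set X'} (hs : Dense s) (ht : Dense t) (f : s ≃ₜ t)
    (hf : Continuous (hs.extend fun x => (f x : X')))
    (hf' : Continuous (ht.extend fun x => (f.symm x : X))) :
    Function.LeftInverse (ht.extend fun x => (f.symm x : X)) (hs.extend fun x => (f x : X')) :=
  congrFun <| Continuous.ext_on hs (hf'.comp hf) continuous_id fun x hx => by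
    change ht.extend _ (hs.extend _ ((⟨x, hx⟩ : s) : X)) = ((⟨x, hx⟩ : s) : X)
    rw [hs.extend_eq (f := fun x => (f x : X')) (by fun_prop),
      ht.extend_eq (f := fun x => (f.symm x : X)) (by fun_prop), symm_apply_apply]

def Set.IsLocallyNonseparating (Y : Set X) : Prop :=
  ∀ y ∈ Y, (𝓝 y).HasBasis (fun U => U ∈ 𝓝 y ∧ IsConnected (U \ Y)) id

variable {Y : Set X} {Z : Set X'}

theorem Set.Finite.isLocallyNonseparating [T1Space X] (hY : Y.Finite)
    (h : ∀ y ∈ Y, (𝓝 y).HasBasis (fun U => U ∈ 𝓝 y ∧ IsConnected (U \ {y})) id) :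
    Y.IsLocallyNonseparating := by
  intro y hy
  refine hasBasis_self.2 fun N hN => ?_
  have hN' : N ∩ (Y \ {y})ᶜ ∈ 𝓝 y :=
    inter_mem hN (hY.sdiff.isClosed.isOpen_compl.mem_nhds fun hy' => hy'.2 rfl)
  obtain ⟨U, ⟨hU, hconn⟩, hUN⟩ := (h y hy).mem_iff.1 hN'
  have hdiff : U \ Y = U \ {y} := by
    ext x
    refine ⟨fun ⟨hxU, hxY⟩ => ⟨hxU, fun hxy => hxY (hxy ▸ hy)⟩,
      fun ⟨hxU, hxy⟩ => ⟨hxU, fun hxY => (hUN hxU).2 ⟨hxY, hxy⟩⟩⟩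
  exact ⟨U, hU, hdiff ▸ hconn, hUN.trans inter_subset_left⟩

theorem Set.IsLocallyNonseparating.dense_compl (hY : Y.IsLocallyNonseparating) :
    Dense Yᶜ := by
  intro y
  by_cases hy : y ∈ Y
  · refine mem_closure_iff_nhds.2 fun N hN => ?_
    obtain ⟨U, ⟨-, hconn⟩, hUN⟩ := (hY y hy).mem_iff.1 hN
    exact hconn.nonempty.mono fun x hx => ⟨hUN hx.1, hx.2⟩
  · exact subset_closure hy

theorem Set.IsLocallyNonseparating.exists_tendsto_comap_nhds [T2Space X] [CompactSpace X']
    [T2Space X'] (hY : Y.IsLocallyNonseparating) (hZ : Z.Finite)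
    (f : (Yᶜ : Set X) ≃ₜ (Zᶜ : Set X')) {y : X} (hy : y ∈ Y) :
    ∃ z ∈ Z, Tendsto (fun x => (f x : X')) (comap (↑) (𝓝 y)) (𝓝 z) := by
  have hB := ((hY y hy).comap ((↑) : (Yᶜ : Set X) → X)).map fun x => (f x : X')
  have hpre : ∀ U : Set X, IsConnected (U \ Y) →
      IsConnected (((↑) : (Yᶜ : Set X) → X) ⁻¹' U) := by
    intro U hU
    have himage : (↑) '' (((↑) : (Yᶜ : Set X) → X) ⁻¹' U) = U \ Y := by
      rw [Subtype.image_preimage_coe, inter_comm, sdiff_eq]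
    exact ⟨(himage ▸ hU.nonempty).of_image,
      Topology.IsInducing.subtypeVal.isPreconnected_image.1 (himage ▸ hU.isPreconnected)⟩
  have := hB.neBot_iff.2 fun hU => ((hpre _ hU.2).nonempty.image _)
  refine exists_le_nhds_of_hasBasis_isPreconnected hZ hB
    (fun U hU => ((hpre U hU.2).isPreconnected.image _
      (continuous_subtype_val.comp f.continuous).continuousOn)) ?_
  calc map (fun x => (f x : X')) (comap (↑) (𝓝 y))
      ≤ map ((↑) ∘ f) (cocompact (Yᶜ : Set X)) := map_mono (comap_nhds_le_cocompact (not_not.2 hy))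
    _ = map (↑) (cocompact (Zᶜ : Set X')) := by rw [← map_map, f.map_cocompact]
    _ ≤ 𝓝ˢ Z := map_cocompact_compl_le_nhdsSet

theorem Set.IsLocallyNonseparating.continuous_extend [T2Space X] [CompactSpace X'] [T2Space X']
    (hY : Y.IsLocallyNonseparating) (hZ : Z.Finite)
    (f : (Yᶜ : Set X) ≃ₜ (Zᶜ : Set X')) :
    Continuous (hY.dense_compl.extend fun x => (f x : X')) := by
  refine hY.dense_compl.continuous_extend fun x => ?_
  by_cases hx : x ∈ Y
  · obtain ⟨z, -, hz⟩ := hY.exists_tendsto_comap_nhds hZ f hx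
    exact ⟨z, hz⟩
  · refine ⟨f ⟨x, hx⟩, ?_⟩
    change Tendsto _ (comap _ (𝓝 ((⟨x, hx⟩ : (Yᶜ : Set X)) : X))) _
    rw [← Topology.IsInducing.subtypeVal.nhds_eq_comap]
    exact (continuous_subtype_val.comp f.continuous).continuousAt

theorem Set.IsLocallyNonseparating.exists_homeomorph_extend [CompactSpace X] [T2Space X]
    [CompactSpace X'] [T2Space X'] (hY : Y.IsLocallyNonseparating) (hYf : Y.Finite) (hZ : Z.IsLocallyNonseparating) (hZf : Z.Finite)
    (f : (Yᶜ : Set X) ≃ₜ (Zᶜ : Set X')) :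
    ∃ F : X ≃ₜ X', ∀ x : (Yᶜ : Set X), F x = f x := by
  have hf := hY.continuous_extend hZf f
  have hf' := hZ.continuous_extend hYf f.symm
  refine ⟨⟨⟨_, _, f.leftInverse_extend_symm_extend hY.dense_compl hZ.dense_compl hf hf',
    f.symm.leftInverse_extend_symm_extend hZ.dense_compl hY.dense_compl hf' hf⟩, hf, hf'⟩,
    hY.dense_compl.extend_eq (continuous_subtype_val.comp f.continuous)⟩

end NonseparatingSets

theorem homeomorph_extends_of_closed_surface_general
    (S : Type*) [TopologicalSpace S] [CompactSpace S] [T2Space S]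
    [ChartedSpace (EuclideanSpace ℝ (Fin 2)) S]
    (Y : Set S) (hY : Y.Finite)
    (f : (Yᶜ : Set S) ≃ₜ (Yᶜ : Set S)) :
    ∃! F : S ≃ₜ S, ∀ x : (Yᶜ : Set S), F (x : S) = (f x : S) := by
  have hrank : 1 < Module.rank ℝ (EuclideanSpace ℝ (Fin 2)) := by
    rw [← Module.finrank_eq_rank, finrank_euclideanSpace_fin]; norm_num
  have hsep : Y.IsLocallyNonseparating := hY.isLocallyNonseparating fun y _ =>
    ChartedSpace.hasBasis_nhds_isConnected_diff_singleton hrank y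
  obtain ⟨F, hF⟩ := hsep.exists_homeomorph_extend hY hsep hY f
  refine ⟨F, hF, fun G hG => Homeomorph.ext <| congrFun <|
    Continuous.ext_on hsep.dense_compl G.continuous F.continuous fun x hx => ?_⟩
  rw [hG ⟨x, hx⟩, hF ⟨x, hx⟩]

/-- Any self-homeomorphism of a closed surface minus a finite set of points extends
uniquely to a self-homeomorphism of the surface. -/
theorem homeomorph_extends_of_closed_surface
    (S : Type*) [TopologicalSpace S] [CompactSpace S] [ConnectedSpace S] [T2Space S]
    [SecondCountableTopology S] [ChartedSpace (EuclideanSpace ℝ (Fin 2)) S]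
    (Y : Set S) (hY : Y.Finite)
    (f : (Yᶜ : Set S) ≃ₜ (Yᶜ : Set S)) :
    ∃! F : S ≃ₜ S, ∀ x : (Yᶜ : Set S), F (x : S) = (f x : S) :=
  homeomorph_extends_of_closed_surface_general S Y hY f
end

section
/- Let H be a finite group acting continuously and freely on the circle S¹ (i.e., for each h ∈ H the map x ↦ h·x is continuous, and h·x ≠ x whenever h ≠ 1). Then H is cyclic. -/
/-!
The points of an orbit `O` cut the circle into `|O|` open arcs, and every element of `H` maps each
arc into an arc, endpoints to endpoints. No `h ≠ 1` maps an arc into itself: it would then have a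
fixed point in the closed arc. Hence if `g` moves a point of `O` to the next one in the cyclic
order, it moves every point of `O` to the next one, so the powers of `g` reach all of `O`, and
freeness gives `H = ⟨g⟩`.
-/

open Real Set Function Topology MulAction

theorem Set.Icc.exists_isFixedPt_of_continuous {a b : ℝ} (hab : a ≤ b) {F : Icc a b → Icc a b}
    (hF : Continuous F) : ∃ t, IsFixedPt F t := by
  set u : ℝ → ℝ := fun s => (F (projIcc a b hab s) : ℝ) - s
  have hu : Continuous u :=
    (continuous_subtype_val.comp (hF.comp continuous_projIcc)).sub continuous_id
  obtain ⟨s, hs, hs0⟩ := intermediate_value_Icc' hab hu.continuousOn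
    (show (0 : ℝ) ∈ Icc (u b) (u a) from ⟨by simp [u, (F _).2.2], by simp [u, (F _).2.1]⟩)
  refine ⟨⟨s, hs⟩, Subtype.ext ?_⟩
  simpa [u, projIcc_of_mem hab hs, sub_eq_zero] using hs0

theorem eq_of_smul_eq_smul_of_free {H X : Type*} [Group H] [MulAction H X]
    (hfree : ∀ (h : H) (x : X), h ≠ 1 → h • x ≠ x) {g h : H} {x : X} (hx : g • x = h • x) :
    g = h := by
  by_contra hgh
  exact hfree (h⁻¹ * g) x (by rwa [ne_eq, inv_mul_eq_one, eq_comm])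
    (by rw [mul_smul, hx, inv_smul_smul])

namespace AddCircle

variable {p : ℝ}

theorem coe_eq_coe_iff_exists_int {x y : ℝ} :
    (x : AddCircle p) = y ↔ ∃ m : ℤ, y = x + m * p := by
  rw [QuotientAddGroup.eq, AddSubgroup.mem_zmultiples_iff]
  exact exists_congr fun m => by rw [zsmul_eq_mul]; constructor <;> intro h <;> linarith

theorem coe_add_int_mul (x : ℝ) (m : ℤ) : ((x + m * p : ℝ) : AddCircle p) = x :=
  (coe_eq_coe_iff_exists_int.2 ⟨m, rfl⟩).symm

theorem image_coe_Ioo_add_int_mul (a b : ℝ) (m : ℤ) :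
    ((↑) '' Ioo (a + m * p) (b + m * p) : Set (AddCircle p)) = (↑) '' Ioo a b := by
  rw [← image_add_const_Ioo, image_image]
  simp only [coe_add_int_mul]

theorem closure_image_coe_Ioo {a b : ℝ} (hab : a < b) :
    closure ((↑) '' Ioo a b : Set (AddCircle p)) = (↑) '' Icc a b := by
  have hcont := AddCircle.continuous_mk' p
  refine (closure_minimal (image_mono Ioo_subset_Icc_self)
    (isCompact_Icc.image hcont).isClosed).antisymm ?_
  rw [← closure_Ioo hab.ne]
  exact image_closure_subset_closure_image hcont

structure IsLiftEnumeration (O : Set (AddCircle p)) (n : ℕ) (β : ℤ → ℝ) : Prop where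
  strictMono : StrictMono β
  apply_add : ∀ k, β (k + n) = β k + p
  coe_mem_iff : ∀ t : ℝ, (t : AddCircle p) ∈ O ↔ t ∈ range β

namespace IsLiftEnumeration

variable {O : Set (AddCircle p)} {n : ℕ} {β : ℤ → ℝ} (hβ : IsLiftEnumeration O n β)
include hβ

theorem coe_mem (k : ℤ) : (β k : AddCircle p) ∈ O := (hβ.coe_mem_iff _).2 ⟨k, rfl⟩

theorem apply_add_mul (k m : ℤ) : β (k + m * n) = β k + m * p := by
  induction m using Int.induction_on with
  | zero => simp
  | succ m ih => rw [add_one_mul, ← add_assoc, hβ.apply_add, ih]; push_cast; ring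
  | pred m ih =>
    have := hβ.apply_add (k + (-m - 1) * n)
    rw [show k + (-m - 1) * n + n = k + -m * n by ring, ih] at this
    push_cast at this ⊢; linarith

theorem coe_eq_coe_iff {k l : ℤ} : (β k : AddCircle p) = β l ↔ k ≡ l [ZMOD n] := by
  rw [coe_eq_coe_iff_exists_int, Int.modEq_iff_dvd]
  constructor
  · rintro ⟨m, hm⟩
    rw [← hβ.apply_add_mul] at hm
    exact ⟨m, by rw [hβ.strictMono.injective hm]; ring⟩
  · rintro ⟨m, hm⟩
    exact ⟨m, by rw [← hβ.apply_add_mul]; congr 1; linarith⟩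

theorem coe_notMem_of_mem_Ioo {k : ℤ} {t : ℝ} (ht : t ∈ Ioo (β k) (β (k + 1))) :
    (t : AddCircle p) ∉ O := by
  rw [hβ.coe_mem_iff]
  rintro ⟨m, rfl⟩
  exact hβ.strictMono.monotone.ne_of_lt_of_lt_int k ht.1 ht.2 m rfl

theorem eq_or_eq_of_mem_Icc {k : ℤ} {t : ℝ} (ht : t ∈ Icc (β k) (β (k + 1)))
    (hO : (t : AddCircle p) ∈ O) : (t : AddCircle p) = β k ∨ (t : AddCircle p) = β (k + 1) := by
  obtain ⟨m, rfl⟩ := (hβ.coe_mem_iff t).1 hO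
  have h1 := hβ.strictMono.le_iff_le.1 ht.1
  have h2 := hβ.strictMono.le_iff_le.1 ht.2
  obtain rfl | rfl : m = k ∨ m = k + 1 := by omega
  exacts [Or.inl rfl, Or.inr rfl]

theorem apply_add_one_lt (hn : 1 < n) (k : ℤ) : β (k + 1) < β k + p :=
  hβ.apply_add k ▸ hβ.strictMono (by omega)

theorem coe_ne_coe_add_one (hn : 1 < n) (k : ℤ) : (β k : AddCircle p) ≠ β (k + 1) := by
  rw [Ne, hβ.coe_eq_coe_iff, Int.modEq_iff_dvd, add_sub_cancel_left]
  exact fun h => by have := Int.eq_one_of_dvd_one (by positivity) h; omega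

theorem image_Ioo_eq_of_modEq {k l : ℤ} (h : k ≡ l [ZMOD n]) :
    ((↑) '' Ioo (β k) (β (k + 1)) : Set (AddCircle p)) = (↑) '' Ioo (β l) (β (l + 1)) := by
  obtain ⟨m, hm⟩ := (Int.modEq_iff_dvd.1 h)
  rw [show l = k + m * n by linarith, show k + m * n + 1 = k + 1 + m * n by ring,
    hβ.apply_add_mul, hβ.apply_add_mul, image_coe_Ioo_add_int_mul]

end IsLiftEnumeration

variable [hp : Fact (0 < p)]

theorem subset_image_coe_Ioo_of_isPreconnected {a b : ℝ} (hab : a < b) (hb : b < a + p)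
    {C : Set (AddCircle p)} (hC : IsPreconnected C) (ha : (a : AddCircle p) ∉ C)
    (hb' : (b : AddCircle p) ∉ C) (hmeet : (C ∩ (↑) '' Ioo a b).Nonempty) :
    C ⊆ (↑) '' Ioo a b := by
  refine hC.subset_left_of_subset_union (QuotientAddGroup.isOpenMap_coe _ isOpen_Ioo)
    (QuotientAddGroup.isOpenMap_coe _ (isOpen_Ioo (a := b) (b := a + p))) ?_ ?_ hmeet
  · rw [disjoint_left]
    rintro _ ⟨s, hs, rfl⟩ ⟨t, ht, hts⟩
    have := (coe_eq_coe_iff_of_mem_Ico (p := p) (a := a) ⟨hab.le.trans ht.1.le, ht.2⟩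
      ⟨hs.1.le, hs.2.trans hb⟩).1 hts
    linarith [hs.2, ht.1]
  · intro x hx
    obtain ⟨t, ht, rfl⟩ : x ∈ (↑) '' Ico a (a + p) := (coe_image_Ico_eq p a).symm ▸ mem_univ x
    have hta : t ≠ a := by rintro rfl; exact ha hx
    have htb : t ≠ b := by rintro rfl; exact hb' hx
    rcases htb.lt_or_gt with h | h
    · exact Or.inl ⟨t, ⟨ht.1.lt_of_ne' hta, h⟩, rfl⟩
    · exact Or.inr ⟨t, ⟨h, ht.2⟩, rfl⟩

theorem exists_isFixedPt_of_mapsTo_image_coe_Icc {a b : ℝ} (hab : a ≤ b) (hb : b < a + p)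
    {f : AddCircle p → AddCircle p} (hf : Continuous f)
    (hmaps : MapsTo f ((↑) '' Icc a b) ((↑) '' Icc a b)) : ∃ x, IsFixedPt f x := by
  set ι : Icc a b → AddCircle p := fun t => t
  have hι : IsClosedEmbedding ι := by
    refine ((AddCircle.continuous_mk' p).comp continuous_subtype_val).isClosedEmbedding
      fun s t hst => Subtype.ext ?_
    exact (coe_eq_coe_iff_of_mem_Ico (a := a) ⟨s.2.1, s.2.2.trans_lt hb⟩
      ⟨t.2.1, t.2.2.trans_lt hb⟩).1 hst
  choose F hF using fun t : Icc a b => hmaps (mem_image_of_mem _ t.2)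
  set F' : Icc a b → Icc a b := fun t => ⟨F t, (hF t).1⟩
  have hF'c : Continuous F' := by
    rw [hι.isInducing.continuous_iff]
    simpa only [comp_def, ι, F', (hF _).2] using hf.comp hι.continuous
  obtain ⟨t, ht⟩ := Set.Icc.exists_isFixedPt_of_continuous hab hF'c
  exact ⟨ι t, by simpa [IsFixedPt, ι, F', (hF t).2] using congrArg ι ht⟩

theorem exists_orderEmbedding_range_eq {O : Set (AddCircle p)} (hfin : O.Finite) :
    ∃ α : Fin O.ncard ↪o ℝ, range α = Ico 0 p ∩ (↑) ⁻¹' O := by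
  set L : Set ℝ := Ico 0 p ∩ (↑) ⁻¹' O
  have hinj : InjOn ((↑) : ℝ → AddCircle p) L := fun s hs t ht hst =>
    (coe_eq_coe_iff_of_mem_Ico (a := 0) (by simpa using hs.1) (by simpa using ht.1)).1 hst
  have himage : (↑) '' L = O := by
    refine (image_subset_iff.2 inter_subset_right).antisymm fun x hx => ?_
    obtain ⟨t, ht, rfl⟩ := eq_coe_Ico x
    exact ⟨t, ⟨ht, hx⟩, rfl⟩
  have hLfin : L.Finite := Finite.of_finite_image (himage ▸ hfin) hinj
  have hcard : hLfin.toFinset.card = O.ncard := by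
    rw [← ncard_eq_toFinset_card L hLfin, ← himage, hinj.ncard_image]
  exact ⟨hLfin.toFinset.orderEmbOfFin hcard, by simp [Finset.range_orderEmbOfFin]⟩

theorem exists_isLiftEnumeration {O : Set (AddCircle p)} (hfin : O.Finite) (hne : O.Nonempty) :
    ∃ β, IsLiftEnumeration O O.ncard β := by
  set n := O.ncard
  obtain ⟨α, hα⟩ := exists_orderEmbedding_range_eq hfin
  have hαmem (i) : α i ∈ Ico 0 p ∩ (↑) ⁻¹' O := hα ▸ mem_range_self i
  have : NeZero n := ⟨((ncard_pos hfin).2 hne).ne'⟩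
  set β : ℤ → ℝ := (fun qi : ℤ × Fin n => α qi.2 + qi.1 * p) ∘ Int.divModEquiv n
  have hβ (q : ℤ) (i : Fin n) : β (q * n + i) = α i + q * p := by
    have : (Int.divModEquiv n).symm (q, i) = q * n + i := rfl
    simp only [β, comp_apply, ← this, Equiv.apply_symm_apply]
  have hdecomp (k : ℤ) : ∃ (q : ℤ) (i : Fin n), k = q * n + i :=
    ⟨_, _, ((Int.divModEquiv n).symm_apply_apply k).symm⟩
  refine ⟨β, strictMono_int_of_lt_succ fun k => ?_, fun k => ?_, fun t => ⟨fun ht => ?_, ?_⟩⟩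
  · obtain ⟨q, i, rfl⟩ := hdecomp k
    by_cases hi : (i : ℕ) + 1 < n
    · rw [show q * n + i + 1 = q * n + (⟨i + 1, hi⟩ : Fin n) by push_cast; ring, hβ, hβ]
      gcongr
      exact α.strictMono (Fin.lt_def.2 (Nat.lt_succ_self _))
    · have : (i : ℤ) + 1 = n := by omega
      rw [show q * n + i + 1 = (q + 1) * n + (0 : Fin n) by
        rw [Fin.val_zero]; push_cast; linear_combination this,
        hβ, hβ]
      push_cast
      linarith [(hαmem i).1.2, (hαmem 0).1.1]
  · obtain ⟨q, i, rfl⟩ := hdecomp k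
    rw [show q * n + i + n = (q + 1) * n + i by ring, hβ, hβ]
    push_cast; ring
  · set r := toIcoMod hp.out 0 t
    have htr : t = r + toIcoDiv hp.out 0 t * p := by
      rw [← zsmul_eq_mul, toIcoMod_add_toIcoDiv_zsmul]
    obtain ⟨i, hi⟩ : r ∈ range α :=
      hα ▸ ⟨toIcoMod_mem_Ico' _ _, by rwa [htr, coe_add_int_mul] at ht⟩
    exact ⟨toIcoDiv hp.out 0 t * n + i, by rw [hβ, hi, ← htr]⟩
  · rintro ⟨k, rfl⟩
    obtain ⟨q, i, rfl⟩ := hdecomp k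
    rw [hβ, coe_add_int_mul]
    exact (hαmem i).2

namespace IsLiftEnumeration

variable {O : Set (AddCircle p)} {n : ℕ} {β : ℤ → ℝ} (hβ : IsLiftEnumeration O n β)
include hβ

theorem n_pos : 0 < n := by
  refine Nat.pos_of_ne_zero fun h => hp.out.ne' ?_
  simpa [h] using hβ.apply_add 0

theorem exists_natCast_coe_eq {x : AddCircle p} (hx : x ∈ O) :
    ∃ k : ℕ, (β k : AddCircle p) = x := by
  obtain ⟨t, rfl⟩ := QuotientAddGroup.mk_surjective x
  obtain ⟨k, rfl⟩ := (hβ.coe_mem_iff t).1 hx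
  have hn : (n : ℤ) ≠ 0 := by exact_mod_cast hβ.n_pos.ne'
  refine ⟨(k % n).toNat, hβ.coe_eq_coe_iff.2 ?_⟩
  rw [Int.toNat_of_nonneg (Int.emod_nonneg k hn)]
  exact Int.mod_modEq k n

theorem exists_mem_image_Ioo {x : AddCircle p} (hx : x ∉ O) :
    ∃ k, x ∈ ((↑) '' Ioo (β k) (β (k + 1)) : Set (AddCircle p)) := by
  obtain ⟨t, ht, rfl⟩ : x ∈ (↑) '' Ico (β 0) (β 0 + p) :=
    (coe_image_Ico_eq p (β 0)).symm ▸ mem_univ x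
  have htn : t < β n := by simpa using ht.2.trans_eq (hβ.apply_add 0).symm
  obtain ⟨k, hk, hmax⟩ := Int.exists_greatest_of_bdd (P := fun k => β k ≤ t)
    ⟨n, fun m hm => (hβ.strictMono.lt_iff_lt.1 (hm.trans_lt htn)).le⟩ ⟨0, ht.1⟩
  have hne : β k ≠ t := by rintro rfl; exact hx (hβ.coe_mem k)
  exact ⟨k, t, ⟨hk.lt_of_ne hne, not_le.1 fun h => by linarith [hmax _ h]⟩, rfl⟩

theorem exists_mapsTo_image_Ioo (hn : 1 < n) {f : AddCircle p → AddCircle p} (hf : Continuous f)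
    (hf_inj : Injective f) (hfO : ∀ x, f x ∈ O ↔ x ∈ O) (k : ℤ) :
    ∃ l, MapsTo f ((↑) '' Ioo (β k) (β (k + 1))) ((↑) '' Ioo (β l) (β (l + 1))) ∧
      (f (β k) = β l ∧ f (β (k + 1)) = β (l + 1) ∨
        f (β k) = β (l + 1) ∧ f (β (k + 1)) = β l) := by
  set A : ℤ → Set (AddCircle p) := fun k => (↑) '' Ioo (β k) (β (k + 1))
  have hkk : β k < β (k + 1) := hβ.strictMono (lt_add_one k)
  have hfA : ∀ y ∈ f '' A k, y ∉ O := by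
    rintro _ ⟨_, ⟨t, ht, rfl⟩, rfl⟩ hO
    exact hβ.coe_notMem_of_mem_Ioo ht ((hfO _).1 hO)
  obtain ⟨t, ht⟩ := exists_between hkk
  have hft : f t ∈ f '' A k := mem_image_of_mem f (mem_image_of_mem _ ht)
  obtain ⟨l, hl⟩ := hβ.exists_mem_image_Ioo (hfA _ hft)
  have hll : β l < β (l + 1) := hβ.strictMono (lt_add_one l)
  have hmaps : MapsTo f (A k) (A l) := mapsTo_iff_image_subset.2 <|
    subset_image_coe_Ioo_of_isPreconnected hll (hβ.apply_add_one_lt hn l)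
      ((isPreconnected_Ioo.image _ (AddCircle.continuous_mk' p).continuousOn).image f
        hf.continuousOn)
      (fun h => hfA _ h (hβ.coe_mem l)) (fun h => hfA _ h (hβ.coe_mem (l + 1)))
      ⟨_, hft, hl⟩
  have hends : ∀ t ∈ Icc (β k) (β (k + 1)), (t : AddCircle p) ∈ O →
      f t = β l ∨ f t = β (l + 1) := by
    intro t ht htO
    have hmapsC := hmaps.closure hf
    rw [closure_image_coe_Ioo hkk, closure_image_coe_Ioo hll] at hmapsC
    obtain ⟨s, hs, hst⟩ := hmapsC (mem_image_of_mem _ ht)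
    rw [← hst]
    exact hβ.eq_or_eq_of_mem_Icc hs (hst ▸ (hfO _).2 htO)
  refine ⟨l, hmaps, ?_⟩
  have hne : f (β k) ≠ f (β (k + 1)) := hf_inj.ne (hβ.coe_ne_coe_add_one hn k)
  rcases hends _ (left_mem_Icc.2 hkk.le) (hβ.coe_mem k) with h1 | h1 <;>
  rcases hends _ (right_mem_Icc.2 hkk.le) (hβ.coe_mem (k + 1)) with h2 | h2
  · exact absurd (h1.trans h2.symm) hne
  · exact Or.inl ⟨h1, h2⟩
  · exact Or.inr ⟨h1, h2⟩
  · exact absurd (h1.trans h2.symm) hne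

theorem apply_coe_add_one_eq_of_apply_coe_eq (hn : 1 < n) {f : AddCircle p → AddCircle p}
    (hf : Continuous f) (hf_inj : Injective f) (hfO : ∀ x, f x ∈ O ↔ x ∈ O)
    (hfix : ∀ x, ¬IsFixedPt f x) {k : ℤ} (hk : f (β k) = β (k + 1)) :
    f (β (k + 1)) = β (k + 1 + 1) := by
  obtain ⟨l, hmaps, ⟨h1, h2⟩ | ⟨h1, h2⟩⟩ := hβ.exists_mapsTo_image_Ioo hn hf hf_inj hfO k
  · rw [h2, hβ.coe_eq_coe_iff]
    exact (hβ.coe_eq_coe_iff.1 (h1.symm.trans hk)).add_right 1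
  · -- here `l ≡ k`, so `f` maps the arc from `β k` to `β (k + 1)` into itself
    have hlk : l ≡ k [ZMOD n] := (hβ.coe_eq_coe_iff.1 (h1.symm.trans hk)).add_right_cancel' 1
    rw [hβ.image_Ioo_eq_of_modEq hlk] at hmaps
    have hkk : β k < β (k + 1) := hβ.strictMono (lt_add_one k)
    have hK := hmaps.closure hf
    rw [closure_image_coe_Ioo hkk] at hK
    obtain ⟨x, hx⟩ :=
      exists_isFixedPt_of_mapsTo_image_coe_Icc hkk.le (hβ.apply_add_one_lt hn k) hf hK
    exact (hfix x hx).elim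

theorem apply_coe_natCast_eq (hn : 1 < n) {f : AddCircle p → AddCircle p}
    (hf : Continuous f) (hf_inj : Injective f) (hfO : ∀ x, f x ∈ O ↔ x ∈ O)
    (hfix : ∀ x, ¬IsFixedPt f x) (h0 : f (β 0) = β 1) (k : ℕ) : f (β k) = β (k + 1) := by
  induction k with
  | zero => simpa using h0
  | succ k ih => push_cast; exact hβ.apply_coe_add_one_eq_of_apply_coe_eq hn hf hf_inj hfO hfix ih

end IsLiftEnumeration

theorem isCyclic_of_free_continuous_action {H : Type*} [Group H] [Finite H]
    [MulAction H (AddCircle p)] (hcont : ∀ h : H, Continuous fun x : AddCircle p => h • x)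
    (hfree : ∀ (h : H) (x : AddCircle p), h ≠ 1 → h • x ≠ x) : IsCyclic H := by
  obtain hH | hH := subsingleton_or_nontrivial H
  · exact isCyclic_of_subsingleton
  set O := orbit H (0 : AddCircle p)
  have hfin : O.Finite := finite_range _
  obtain ⟨β, hβ⟩ := exists_isLiftEnumeration hfin ⟨0, mem_orbit_self 0⟩
  have hO (h : H) (x : AddCircle p) : h • x ∈ O ↔ x ∈ O := by
    rw [← orbit_eq_iff, orbit_smul, orbit_eq_iff]
  have hn : 1 < O.ncard := by
    obtain ⟨h, hh⟩ := exists_ne (1 : H)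
    exact (one_lt_ncard_iff hfin).2
      ⟨0, h • 0, mem_orbit_self 0, mem_orbit _ _, (hfree h 0 hh).symm⟩
  obtain ⟨g, hg⟩ : (β 1 : AddCircle p) ∈ orbit H (β 0 : AddCircle p) := by
    rw [orbit_eq_iff.2 (hβ.coe_mem 0)]
    exact hβ.coe_mem 1
  have hg1 : g ≠ 1 := by rintro rfl; exact hβ.coe_ne_coe_add_one hn 0 (by simpa using hg)
  have hpow (k : ℕ) : g ^ k • (β 0 : AddCircle p) = β k := by
    induction k with
    | zero => simp
    | succ k ih =>
      rw [pow_succ', mul_smul, ih]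
      exact_mod_cast hβ.apply_coe_natCast_eq hn (hcont g) (MulAction.injective g) (hO g)
        (fun x => hfree g x hg1) hg k
  refine ⟨g, fun h => ?_⟩
  obtain ⟨k, hk⟩ := hβ.exists_natCast_coe_eq ((hO h _).2 (hβ.coe_mem 0))
  exact eq_of_smul_eq_smul_of_free hfree ((hpow k).trans hk) ▸ Subgroup.npow_mem_zpowers g k

end AddCircle

/-- A finite group acting continuously and freely on the circle `S¹` is cyclic. -/
theorem isCyclic_of_free_continuous_action_on_circle
    (H : Type*) [Group H] [Finite H]
    [MulAction H (Metric.sphere (0 : EuclideanSpace ℝ (Fin 2)) 1)]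
    (hcont : ∀ h : H,
      Continuous fun x : Metric.sphere (0 : EuclideanSpace ℝ (Fin 2)) 1 => h • x)
    (hfree : ∀ (h : H) (x : Metric.sphere (0 : EuclideanSpace ℝ (Fin 2)) 1),
      h ≠ 1 → h • x ≠ x) :
    IsCyclic H := by
  let e : AddCircle (2 * π) ≃ₜ Metric.sphere (0 : EuclideanSpace ℝ (Fin 2)) 1 :=
    AddCircle.homeomorphCircle'.trans
      (Complex.orthonormalBasisOneI.repr.toHomeomorph.subtype fun z => by
        simp [Submonoid.unitSphere])
  let := e.toEquiv.mulAction H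
  have : Fact (0 < 2 * π) := ⟨two_pi_pos⟩
  refine AddCircle.isCyclic_of_free_continuous_action (p := 2 * π) (fun h => ?_)
    (fun h x hh hx => ?_)
  · exact e.symm.continuous.comp ((hcont h).comp e.continuous)
  · exact hfree h (e x) hh (e.symm.injective (hx.trans (e.symm_apply_apply x).symm))
end
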